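/- If f: U → ℝ^n is a map, x_0 ∈ U, and for 0 < r < dist(x_0, ∂U) one defines ℓ_f(x_0,r) = min_{|x−x_0|=r} |f(x)−f(x_0)|, L_f(x_0,r) = max_{|x−x_0|=r} |f(x)−f(x_0)|, and ρ_f(x_0,r) = (vol_n f(B(x_0,r))/Ω_n)^{1/n}, then whenever f is continuous, open, and injective on B(x_0,r), one has ℓ_f(x_0,r) ≤ ρ_f(x_0,r) ≤ L_f(x_0,r). -/

import Mathlib

/-!
As `f '' ball x₀ r` is open and `f` is continuous on the compact closed ball, the frontier of the
image lies in `f '' sphere x₀ r`. The ball of radius `ℓ` about `f x₀` therefore misses that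
frontier and, being connected and meeting the image at `f x₀`, lies inside it; and the image, a
bounded open set whose frontier lies in the closed ball of radius `L`, cannot reach outside that
ball, since a ray leaving it would have to cross the frontier. Comparing measures with
`vol (ball c t) = tⁿ Ωₙ` gives `ℓ ≤ ρ ≤ L`.
-/

open MeasureTheory Metric Set Module AffineMap

theorem IsPreconnected.subset_of_disjoint_frontier {X : Type*} [TopologicalSpace X]
    {s V : Set X} (hs : IsPreconnected s) (hV : IsOpen V) (hsV : (s ∩ V).Nonempty)
    (hd : Disjoint s (frontier V)) : s ⊆ V := by
  refine hs.subset_of_closure_inter_subset hV hsV fun x ⟨hxV, hxs⟩ => ?_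
  rw [closure_eq_self_union_frontier] at hxV
  exact hxV.resolve_right (hd.notMem_of_mem_left hxs)

theorem frontier_image_subset_image_sdiff {X Y : Type*} [TopologicalSpace X] [TopologicalSpace Y]
    [T2Space Y] {f : X → Y} {s t : Set X} (ht : IsCompact t) (hf : ContinuousOn f t)
    (hst : s ⊆ t) (hs : IsOpen (f '' s)) : frontier (f '' s) ⊆ f '' (t \ s) := by
  intro z hz
  rw [hs.frontier_eq] at hz
  obtain ⟨hz_cl, hz_not⟩ := hz
  have hft : IsClosed (f '' t) := (ht.image_of_continuousOn hf).isClosed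
  obtain ⟨x, hxt, rfl⟩ := hft.closure_subset_iff.mpr (image_mono hst) hz_cl
  exact ⟨x, ⟨hxt, fun hxs => hz_not (mem_image_of_mem f hxs)⟩, rfl⟩

section NormedSpace

variable {E : Type*} [NormedAddCommGroup E] [NormedSpace ℝ E]

theorem ball_subset_of_disjoint_frontier {V : Set E} {c : E} {ℓ : ℝ} (hV : IsOpen V)
    (hc : c ∈ V) (hd : Disjoint (ball c ℓ) (frontier V)) : ball c ℓ ⊆ V := by
  rcases le_or_gt ℓ 0 with hℓ | hℓ
  · simp [ball_eq_empty.mpr hℓ]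
  · exact (convex_ball c ℓ).isPreconnected.subset_of_disjoint_frontier hV
      ⟨c, mem_ball_self hℓ, hc⟩ hd

/-- The ray from `c` through a point of `V` outside the ball would leave the bounded set `V`
without crossing its frontier. -/
theorem subset_closedBall_of_frontier_subset {V : Set E} {c : E} {L : ℝ} (hL : 0 ≤ L)
    (hV : IsOpen V) (hVb : Bornology.IsBounded V) (hfr : frontier V ⊆ closedBall c L) :
    V ⊆ closedBall c L := by
  intro y hy
  by_contra hyL
  have hLy : L < dist c y := by rw [dist_comm]; simpa using hyL
  have hdist : ∀ t : ℝ, 1 ≤ t → dist (lineMap c y t) c = t * dist c y := fun t ht => by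
    rw [dist_lineMap_left, Real.norm_of_nonneg (by linarith)]
  set ray := lineMap c y '' Ici (1 : ℝ)
  have hray_pre : IsPreconnected ray :=
    isPreconnected_Ici.image _ (lineMap_continuous (R := ℝ)).continuousOn
  have hray_out : Disjoint ray (frontier V) := by
    refine disjoint_left.mpr ?_
    rintro _ ⟨t, ht, rfl⟩ hfront
    have := mem_closedBall.mp (hfr hfront)
    rw [hdist t ht] at this
    nlinarith [mem_Ici.mp ht]
  have hray_sub : ray ⊆ V :=
    hray_pre.subset_of_disjoint_frontier hV ⟨y, ⟨1, self_mem_Ici, lineMap_apply_one c y⟩, hy⟩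
      hray_out
  obtain ⟨M, hM⟩ := (hVb.subset hray_sub).subset_closedBall c
  set t := max 1 ((M + 1) / dist c y)
  have hfar : M + 1 ≤ t * dist c y := by
    rw [← div_le_iff₀ (hL.trans_lt hLy)]; exact le_max_right _ _
  have := mem_closedBall.mp (hM ⟨t, mem_Ici.mpr (le_max_left _ _), rfl⟩)
  rw [hdist t (le_max_left _ _)] at this
  linarith

end NormedSpace

section MeanRadius

variable {E : Type*} [NormedAddCommGroup E] [NormedSpace ℝ E] [MeasurableSpace E]

noncomputable def meanRadius (μ : Measure E) (s : Set E) : ℝ :=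
  (μ.real s / μ.real (ball 0 1)) ^ ((1 : ℝ) / finrank ℝ E)

variable [FiniteDimensional ℝ E] (μ : Measure E) [μ.IsAddHaarMeasure]

theorem measureReal_ball_pos (x : E) {r : ℝ} (hr : 0 < r) : 0 < μ.real (ball x r) :=
  ENNReal.toReal_pos (measure_ball_pos μ x hr).ne' measure_ball_lt_top.ne

variable [BorelSpace E] [Nontrivial E]

theorem le_meanRadius_of_ball_subset {s : Set E} {c : E} {ℓ : ℝ} (hℓ : 0 ≤ ℓ) (hs : μ s ≠ ⊤)
    (h : ball c ℓ ⊆ s) : ℓ ≤ meanRadius μ s := by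
  have hΩ : 0 < μ.real (ball (0 : E) 1) := measureReal_ball_pos μ 0 one_pos
  rw [meanRadius, one_div, Real.le_rpow_inv_iff_of_pos hℓ (by positivity)
    (by exact_mod_cast finrank_pos), Real.rpow_natCast, le_div_iff₀ hΩ,
    ← Measure.addHaar_real_closedBall μ c hℓ, Measure.addHaar_real_closedBall_eq_addHaar_real_ball]
  exact measureReal_mono h hs

theorem meanRadius_le_of_subset_closedBall {s : Set E} {c : E} {L : ℝ} (hL : 0 ≤ L)
    (h : s ⊆ closedBall c L) : meanRadius μ s ≤ L := by
  have hΩ : 0 < μ.real (ball (0 : E) 1) := measureReal_ball_pos μ 0 one_pos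
  rw [meanRadius, one_div, Real.rpow_inv_le_iff_of_pos (by positivity) hL
    (by exact_mod_cast finrank_pos), Real.rpow_natCast, div_le_iff₀ hΩ,
    ← Measure.addHaar_real_closedBall μ c hL]
  exact measureReal_mono h measure_closedBall_lt_top.ne

end MeanRadius

theorem mean_radius_between_general (n : ℕ) (hn : 1 ≤ n)
    (f : EuclideanSpace ℝ (Fin n) → EuclideanSpace ℝ (Fin n))
    (x₀ : EuclideanSpace ℝ (Fin n)) (r : ℝ) (hr : 0 < r)
    (hc : ContinuousOn f (closedBall x₀ r))
    (hopen : IsOpen (f '' ball x₀ r)) :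
    sInf ((fun x => dist (f x) (f x₀)) '' sphere x₀ r) ≤
        ((volume (f '' ball x₀ r)).toReal /
          (volume (ball (0 : EuclideanSpace ℝ (Fin n)) 1)).toReal) ^ ((1 : ℝ) / n) ∧
      ((volume (f '' ball x₀ r)).toReal /
          (volume (ball (0 : EuclideanSpace ℝ (Fin n)) 1)).toReal) ^ ((1 : ℝ) / n) ≤
        sSup ((fun x => dist (f x) (f x₀)) '' sphere x₀ r) := by
  have : Nonempty (Fin n) := ⟨⟨0, hn⟩⟩
  set V := f '' ball x₀ r
  set S := (fun x => dist (f x) (f x₀)) '' sphere x₀ r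
  have hS : ∀ d ∈ S, 0 ≤ d := by rintro _ ⟨x, -, rfl⟩; exact dist_nonneg
  have hVb : Bornology.IsBounded V :=
    ((isCompact_closedBall x₀ r).image_of_continuousOn hc).isBounded.subset
      (image_mono ball_subset_closedBall)
  have hfr : frontier V ⊆ f '' sphere x₀ r := by
    simpa only [closedBall_sdiff_ball] using frontier_image_subset_image_sdiff
      (isCompact_closedBall x₀ r) hc ball_subset_closedBall hopen
  have hinner : ball (f x₀) (sInf S) ⊆ V := by
    refine ball_subset_of_disjoint_frontier hopen (mem_image_of_mem f (mem_ball_self hr))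
      (disjoint_left.mpr fun z hz hzV => ?_)
    obtain ⟨x, hx, rfl⟩ := hfr hzV
    exact (mem_ball.mp hz).not_ge (csInf_le ⟨0, hS⟩ ⟨x, hx, rfl⟩)
  have hSb : BddAbove S := ((isCompact_sphere x₀ r).image_of_continuousOn
    ((continuous_id.dist continuous_const).comp_continuousOn
      (hc.mono sphere_subset_closedBall))).bddAbove
  have houter : V ⊆ closedBall (f x₀) (sSup S) := by
    refine subset_closedBall_of_frontier_subset (Real.sSup_nonneg hS) hopen hVb fun z hzV => ?_
    obtain ⟨x, hx, rfl⟩ := hfr hzV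
    exact mem_closedBall.mpr (le_csSup hSb ⟨x, hx, rfl⟩)
  have hρ : meanRadius volume V = ((volume V).toReal /
      (volume (ball (0 : EuclideanSpace ℝ (Fin n)) 1)).toReal) ^ ((1 : ℝ) / n) := by
    rw [meanRadius, finrank_euclideanSpace_fin, measureReal_def, measureReal_def]
  rw [← hρ]
  exact ⟨le_meanRadius_of_ball_subset volume (Real.sInf_nonneg hS) hVb.measure_lt_top.ne hinner,
    meanRadius_le_of_subset_closedBall volume (Real.sSup_nonneg hS) houter⟩

/-- For a continuous, open, injective map on a ball, the mean radius is squeezed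
between `ℓ_f(x₀,r)` and `L_f(x₀,r)`. -/
theorem mean_radius_between (n : ℕ) (hn : 1 ≤ n)
    (f : EuclideanSpace ℝ (Fin n) → EuclideanSpace ℝ (Fin n))
    (x₀ : EuclideanSpace ℝ (Fin n)) (r : ℝ) (hr : 0 < r)
    (hc : ContinuousOn f (closedBall x₀ r))
    (hinj : Set.InjOn f (closedBall x₀ r))
    (hopen : IsOpen (f '' ball x₀ r)) :
    sInf ((fun x => dist (f x) (f x₀)) '' sphere x₀ r) ≤
        ((volume (f '' ball x₀ r)).toReal /
          (volume (ball (0 : EuclideanSpace ℝ (Fin n)) 1)).toReal) ^ ((1 : ℝ) / n) ∧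
      ((volume (f '' ball x₀ r)).toReal /
          (volume (ball (0 : EuclideanSpace ℝ (Fin n)) 1)).toReal) ^ ((1 : ℝ) / n) ≤
        sSup ((fun x => dist (f x) (f x₀)) '' sphere x₀ r) :=
  mean_radius_between_general n hn f x₀ r hr hc hopen
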